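/- arXiv:1108.1763 — 2 statements merged into one kernel-verified Lean document; each statement's English description precedes it below -/
import Mathlib

section
/- Let α ∈ P¹(F_{3^n}) \ {−1, 1, ∞} and let β = ψ(α) ∈ F_{3^n}*. Then α is θ-periodic of period k if and only if β has odd multiplicative order d > 1 or d = 1, and k equals the multiplicative order of −2 in (Z/dZ)*, where d = ord(β). In particular, α is θ-periodic if and only if the multiplicative order of ψ(α) is odd. -/
open OnePoint

variable (F : Type*) [Field F] [DecidableEq F]

/-- The map `θ(x) = x + x⁻¹`, with `θ(0) = θ(∞) = ∞`. -/
def theta : OnePoint F → OnePoint F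
  | Option.some x => if x = 0 then ∞ else Option.some (x + x⁻¹)
  | Option.none => ∞

/-- The inverse-square map `s(x) = x⁻²`, with `s(0) = ∞`, `s(∞) = 0`. -/
def sMap : OnePoint F → OnePoint F
  | Option.some x => if x = 0 then ∞ else Option.some (x⁻¹ ^ 2)
  | Option.none => Option.some 0

/-- The involution `ψ(x) = (x+1)/(x-1)`, with `ψ(1) = ∞`, `ψ(∞) = 1`. -/
def psi : OnePoint F → OnePoint F
  | Option.some x => if x = 1 then ∞ else Option.some ((x + 1) / (x - 1))
  | Option.none => Option.some 1

/-!
Via `ψ`, the map `θ` is conjugate to `s(x) = x⁻²`: in characteristic 3 one has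
`a² + a + 1 = (a - 1)²` and `a² - a + 1 = (a + 1)²`, whence `ψ(a + a⁻¹) = ψ(a)⁻²`.
On the unit `β = ψ(α)` the iterates of `s` are `β ^ (-2) ^ j`, so `θ^[j] α = α` exactly when
`(-2) ^ j = 1` in `ZMod (ord β)`. Hence the minimal period of `α` is the order of `-2` there,
which is positive iff `-2` is a unit mod `ord β`, i.e. iff `ord β` is odd.
-/

open Function

lemma Function.eq_minimalPeriod_iff {α : Type*} {f : α → α} {x : α} {k : ℕ} (hk : 0 < k) :
    k = minimalPeriod f x ↔ IsPeriodicPt f k x ∧ ∀ j, 0 < j → IsPeriodicPt f j x → k ≤ j := by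
  constructor
  · rintro rfl
    exact ⟨isPeriodicPt_minimalPeriod f x, fun j hj hper => hper.minimalPeriod_le hj⟩
  · rintro ⟨hper, hmin⟩
    exact le_antisymm (hmin _ (hper.minimalPeriod_pos hk) (isPeriodicPt_minimalPeriod f x))
      (hper.minimalPeriod_le hk)

lemma Function.Semiconj.minimalPeriod_eq {α β : Type*} {fa : α → α} {fb : β → β} {g : α → β}
    (h : Semiconj g fa fb) (hg : Injective g) (x : α) :
    minimalPeriod fa x = minimalPeriod fb (g x) := by
  rw [minimalPeriod_eq_minimalPeriod_iff]
  intro n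
  simp only [IsPeriodicPt, IsFixedPt, ← h.iterate_right n x, hg.eq_iff]

lemma zpow_eq_self_iff_intCast_eq_one {G : Type*} [Group G] (x : G) (e : ℤ) :
    x ^ e = x ↔ (e : ZMod (orderOf x)) = 1 := by
  calc x ^ e = x ↔ x ^ e = x ^ (1 : ℤ) := by rw [zpow_one]
    _ ↔ (orderOf x : ℤ) ∣ e - 1 := orderOf_dvd_sub_iff_zpow_eq_zpow.symm
    _ ↔ ((1 : ℤ) : ZMod (orderOf x)) = e := (ZMod.intCast_eq_intCast_iff_dvd_sub 1 e _).symm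
    _ ↔ (e : ZMod (orderOf x)) = 1 := by rw [Int.cast_one, eq_comm]

lemma isUnit_neg_two_iff_odd (d : ℕ) : IsUnit (-2 : ZMod d) ↔ Odd d := by
  rw [IsUnit.neg_iff, ← Nat.cast_ofNat, ZMod.isUnit_iff_coprime, Nat.coprime_two_left]

lemma orderOf_neg_two_pos_iff_odd (d : ℕ) : 0 < orderOf (-2 : ZMod d) ↔ Odd d := by
  refine ⟨fun h => (isUnit_neg_two_iff_odd d).mp (orderOf_pos_iff.mp h).isUnit, fun hd => ?_⟩
  have : NeZero d := ⟨hd.pos.ne'⟩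
  exact orderOf_pos_iff.mpr ((isUnit_neg_two_iff_odd d).mpr hd).isOfFinOrder

variable {F}

@[simp] lemma theta_infty : theta F ∞ = ∞ := rfl

@[simp] lemma theta_coe (a : F) :
    theta F a = if a = 0 then ∞ else ((a + a⁻¹ : F) : OnePoint F) := rfl

@[simp] lemma sMap_infty : sMap F ∞ = (0 : F) := rfl

@[simp] lemma sMap_coe (a : F) :
    sMap F a = if a = 0 then ∞ else ((a⁻¹ ^ 2 : F) : OnePoint F) := rfl

@[simp] lemma psi_infty : psi F ∞ = (1 : F) := rfl

@[simp] lemma psi_coe (a : F) :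
    psi F a = if a = 1 then ∞ else (((a + 1) / (a - 1) : F) : OnePoint F) := rfl

lemma sMap_iterate_coe_unit (u : Fˣ) (j : ℕ) :
    (sMap F)^[j] ((u : F) : OnePoint F) = ((u ^ ((-2 : ℤ) ^ j) : Fˣ) : F) := by
  induction j with
  | zero => simp
  | succ j ih =>
    rw [iterate_succ_apply', ih, sMap_coe, if_neg (Units.ne_zero _)]
    congr 1
    rw [← Units.val_inv_eq_inv_val, ← Units.val_pow_eq_pow_val, ← zpow_neg_one, ← zpow_natCast,
      ← zpow_mul, ← zpow_mul]
    ring_nf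

lemma minimalPeriod_sMap_coe_unit (u : Fˣ) :
    minimalPeriod (sMap F) ((u : F) : OnePoint F) = orderOf (-2 : ZMod (orderOf u)) := by
  rw [orderOf, minimalPeriod_eq_minimalPeriod_iff]
  intro j
  rw [isPeriodicPt_mul_iff_pow_eq_one, IsPeriodicPt, IsFixedPt, sMap_iterate_coe_unit,
    OnePoint.coe_eq_coe, Units.val_inj, zpow_eq_self_iff_intCast_eq_one]
  simp only [Int.cast_pow, Int.cast_neg, Int.cast_ofNat]

section CharThree

variable [CharP F 3]

omit [DecidableEq F] in
lemma two_eq_neg_one : (2 : F) = -1 := by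
  have h3 : (3 : F) = 0 := by exact_mod_cast CharP.cast_eq_zero F 3
  linear_combination h3

lemma psi_involutive : Involutive (psi F) := by
  have h2 : (2 : F) ≠ 0 := by simp [two_eq_neg_one]
  intro x
  induction x using OnePoint.rec with
  | infty => simp
  | coe a =>
    by_cases ha : a = 1
    · simp [ha]
    have hsub : a - 1 ≠ 0 := sub_ne_zero.mpr ha
    have hne : (a + 1) / (a - 1) ≠ 1 := by
      rw [Ne, div_eq_one_iff_eq hsub]
      intro h
      exact h2 (by linear_combination h)
    simp only [psi_coe, ha, hne, if_false, OnePoint.coe_eq_coe]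
    rw [div_add_one hsub, div_sub_one hsub, div_div_div_cancel_right₀ hsub,
      show a + 1 + (a - 1) = 2 * a by ring, show a + 1 - (a - 1) = 2 by ring,
      mul_div_cancel_left₀ a h2]

lemma psi_eq_zero_iff {α : OnePoint F} : psi F α = (0 : F) ↔ α = (-1 : F) := by
  rw [psi_involutive.eq_iff]
  simp

lemma psi_semiconj_theta_sMap : Semiconj (psi F) (theta F) (sMap F) := by
  have h2 := two_eq_neg_one (F := F)
  intro x
  induction x using OnePoint.rec with
  | infty => simp
  | coe a =>
    by_cases ha0 : a = 0
    · simp [ha0]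
    by_cases ha1 : a = 1
    · simp [ha1]
      linear_combination h2
    by_cases ham : a = -1
    · subst ham
      simp [ha1, show (-1 : F) + -1 = 1 by linear_combination -h2]
    have hadd : a + 1 ≠ 0 := fun h => ham (eq_neg_of_add_eq_zero_left h)
    have hsub : a - 1 ≠ 0 := sub_ne_zero.mpr ha1
    have hplus : a + a⁻¹ + 1 = (a - 1) ^ 2 / a := by
      field_simp
      linear_combination a * h2
    have hminus : a + a⁻¹ - 1 = (a + 1) ^ 2 / a := by
      field_simp
      linear_combination (-a) * h2
    have hth : a + a⁻¹ ≠ 1 := by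
      rw [← sub_ne_zero, hminus]
      exact div_ne_zero (pow_ne_zero 2 hadd) ha0
    simp only [theta_coe, psi_coe, sMap_coe, ha0, ha1, hth, div_ne_zero hadd hsub, if_false,
      OnePoint.coe_eq_coe, inv_div]
    rw [hplus, hminus, div_div_div_cancel_right₀ ha0, div_pow]

lemma minimalPeriod_theta_eq_orderOf (α : OnePoint F) (b : F) (hb : psi F α = b)
    (hb0 : b ≠ 0) : minimalPeriod (theta F) α = orderOf (-2 : ZMod (orderOf b)) := by
  obtain ⟨u, rfl⟩ := hb0.isUnit
  rw [psi_semiconj_theta_sMap.minimalPeriod_eq psi_involutive.injective, hb,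
    minimalPeriod_sMap_coe_unit, orderOf_units]

end CharThree

variable (F)

theorem theta_period_eq_order [Fintype F] (n : ℕ)
    (hF : Fintype.card F = 3 ^ n)
    (α : OnePoint F)
    (hα2 : α ≠ ((-1 : F) : OnePoint F))
    (b : F) (hb : psi F α = (b : OnePoint F)) (k : ℕ) (hk : 0 < k) :
    ((Function.IsPeriodicPt (theta F) k α ∧
        ∀ j : ℕ, 0 < j → Function.IsPeriodicPt (theta F) j α → k ≤ j) ↔
      (Odd (orderOf b) ∧ k = orderOf (-2 : ZMod (orderOf b)))) ∧
    ((∃ m : ℕ, 0 < m ∧ (theta F)^[m] α = α) ↔ Odd (orderOf b)) := by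
  have : Fact (Nat.Prime 3) := ⟨Nat.prime_three⟩
  have : CharP F 3 := charP_of_card_eq_prime_pow hF
  have hb0 : b ≠ 0 := by
    rintro rfl
    exact hα2 (psi_eq_zero_iff.mp hb)
  have hperiod := minimalPeriod_theta_eq_orderOf α b hb hb0
  constructor
  · rw [← eq_minimalPeriod_iff hk, hperiod]
    exact ⟨fun h => ⟨(orderOf_neg_two_pos_iff_odd _).mp (h ▸ hk), h⟩, And.right⟩
  · calc (∃ m : ℕ, 0 < m ∧ (theta F)^[m] α = α) ↔ 0 < minimalPeriod (theta F) α :=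
          minimalPeriod_pos_iff_mem_periodicPts.symm
      _ ↔ Odd (orderOf b) := by rw [hperiod, orderOf_neg_two_pos_iff_odd]
end

section
/- Let 2^e be the largest power of 2 dividing 3^n − 1 and let γ ∈ F_{3^n} \ {1, −1} be non-θ-periodic. If 2^e does not divide ord(ψ(γ)), then there exist exactly two distinct x ∈ F_{3^n} with θ(x) = γ; if 2^e divides ord(ψ(γ)), there is no such x. -/
/-!
`θ(x) = γ` is the quadratic equation `x² - γx + 1 = 0`. Its discriminant `γ² - 4` equals
`(γ + 1)(γ - 1) = ψ(γ) (γ - 1)²` in characteristic 3, so it has two roots or none according as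
`b = ψ(γ)` is a square or not. By Euler's criterion `b` is a square iff `ord(b)` divides
`(3ⁿ - 1)/2`; as `ord(b)` divides `3ⁿ - 1 = 2ᵉ · odd`, this happens iff `2ᵉ ∤ ord(b)`.
-/

open OnePoint

variable (F : Type*) [Field F] [DecidableEq F]

theorem Nat.dvd_div_two_iff_not_two_pow_dvd {d m e : ℕ} (hm : Even m)
    (he : 2 ^ e ∣ m ∧ ¬ 2 ^ (e + 1) ∣ m) (hd : d ∣ m) : d ∣ m / 2 ↔ ¬ 2 ^ e ∣ d := by
  obtain ⟨⟨t, rfl⟩, hmax⟩ := he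
  have ht : ¬ 2 ∣ t := fun ⟨u, hu⟩ => hmax ⟨u, by rw [hu, pow_succ, mul_assoc]⟩
  obtain ⟨k, rfl⟩ : ∃ k, e = k + 1 := by
    refine Nat.exists_eq_add_one.mpr (Nat.pos_of_ne_zero fun he0 => ?_)
    rw [he0, pow_zero, one_mul] at hm
    exact ht (even_iff_two_dvd.mp hm)
  have hhalf : 2 ^ (k + 1) * t / 2 = 2 ^ k * t := by
    rw [pow_succ, mul_right_comm, Nat.mul_div_cancel _ two_pos]
  rw [hhalf]
  constructor
  · intro hdk hpow
    have : 2 ^ k * 2 ∣ 2 ^ k * t := pow_succ 2 k ▸ hpow.trans hdk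
    exact ht ((Nat.mul_dvd_mul_iff_left (by positivity)).mp this)
  · intro hpow
    obtain ⟨d₁, d₂, hd₁, hd₂, rfl⟩ := Nat.dvd_mul.mp hd
    obtain ⟨j, -, rfl⟩ := (Nat.dvd_prime_pow Nat.prime_two).mp hd₁
    have hjk : j ≤ k := by
      by_contra! hkj
      exact hpow (Dvd.dvd.mul_right (pow_dvd_pow 2 (by omega)) d₂)
    exact mul_dvd_mul (pow_dvd_pow 2 hjk) hd₂

theorem FiniteField.isSquare_iff_not_two_pow_dvd_orderOf {K : Type*} [Field K] [Fintype K]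
    (hq : Odd (Fintype.card K)) {e : ℕ}
    (he : 2 ^ e ∣ Fintype.card K - 1 ∧ ¬ 2 ^ (e + 1) ∣ Fintype.card K - 1)
    {a : K} (ha : a ≠ 0) : IsSquare a ↔ ¬ 2 ^ e ∣ orderOf a := by
  have hchar : ringChar K ≠ 2 := fun h =>
    Nat.not_even_iff_odd.mpr hq (Nat.even_iff.mpr (FiniteField.even_card_of_char_two h))
  have hhalf : Fintype.card K / 2 = (Fintype.card K - 1) / 2 := by
    obtain ⟨r, hr⟩ := hq
    omega
  rw [FiniteField.isSquare_iff hchar ha, ← orderOf_dvd_iff_pow_eq_one, hhalf]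
  exact Nat.dvd_div_two_iff_not_two_pow_dvd (Nat.Odd.sub_odd hq odd_one) he
    (orderOf_dvd_of_pow_eq_one (FiniteField.pow_card_sub_one_eq_one a ha))

theorem isSquare_mul_sq_iff {K : Type*} [Field K] {a s : K} (hs : s ≠ 0) :
    IsSquare (a * s ^ 2) ↔ IsSquare a := by
  refine ⟨fun h => ?_, fun h => h.mul (IsSquare.sq s)⟩
  simpa [hs] using h.div (IsSquare.sq s)

section Quadratic

variable {K : Type*} [Field K] {a b c : K}

theorem setOf_quadratic_eq_zero_eq_empty (h : ¬ IsSquare (discrim a b c)) :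
    {x : K | a * (x * x) + b * x + c = 0} = ∅ :=
  Set.eq_empty_of_forall_notMem fun x hx =>
    h ⟨2 * a * x + b, by rw [discrim_eq_sq_of_quadratic_eq_zero hx, sq]⟩

theorem ncard_setOf_quadratic_eq_zero_eq_two [NeZero (2 : K)] (ha : a ≠ 0)
    (hsq : IsSquare (discrim a b c)) (h0 : discrim a b c ≠ 0) :
    {x : K | a * (x * x) + b * x + c = 0}.ncard = 2 := by
  obtain ⟨s, hs⟩ := hsq
  have hroots : {x : K | a * (x * x) + b * x + c = 0} =
      {(-b + s) / (2 * a), (-b - s) / (2 * a)} :=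
    Set.ext (quadratic_eq_zero_iff ha hs)
  rw [hroots, Set.ncard_pair]
  intro heq
  have hs0 : s = 0 := by
    field_simp at heq
    have h2s : 2 * s = 0 := by linear_combination heq
    exact (mul_eq_zero.mp h2s).resolve_left two_ne_zero
  exact h0 (by rw [hs, hs0, mul_zero])

end Quadratic

theorem theta_coe_eq_coe_iff {x γ : F} :
    theta F x = γ ↔ x * x - γ * x + 1 = 0 := by
  by_cases hx : x = 0
  · simp [theta, hx]
  · have hxγ : x + x⁻¹ = γ ↔ x * x - γ * x + 1 = 0 := by
      constructor <;> intro h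
      · field_simp at h
        linear_combination h
      · field_simp
        linear_combination h
    rw [show theta F x = ↑(x + x⁻¹) from if_neg hx, OnePoint.coe_eq_coe, hxγ]

theorem psi_coe_of_ne_one {x : F} (hx : x ≠ 1) : psi F x = ↑((x + 1) / (x - 1)) :=
  if_neg hx

theorem preimages_of_nonperiodic [Fintype F] (n : ℕ)
    (hF : Fintype.card F = 3 ^ n) (e : ℕ)
    (he : 2 ^ e ∣ 3 ^ n - 1 ∧ ¬ 2 ^ (e + 1) ∣ 3 ^ n - 1)
    (γ : F) (hγ1 : γ ≠ 1) (hγ2 : γ ≠ -1)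
    (b : F) (hb : psi F (γ : OnePoint F) = (b : OnePoint F)) :
    (¬ 2 ^ e ∣ orderOf b →
      {x : F | theta F (x : OnePoint F) = (γ : OnePoint F)}.ncard = 2) ∧
    (2 ^ e ∣ orderOf b →
      {x : F | theta F (x : OnePoint F) = (γ : OnePoint F)} = ∅) := by
  have h3 : (3 : F) = 0 :=
    eq_zero_of_pow_eq_zero (n := n) (by exact_mod_cast hF ▸ FiniteField.cast_card_eq_zero F)
  have : NeZero (2 : F) := ⟨fun h2 => one_ne_zero (by linear_combination h3 - h2 : (1 : F) = 0)⟩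
  have hγ1' : γ - 1 ≠ 0 := sub_ne_zero.mpr hγ1
  have hbγ : b = (γ + 1) / (γ - 1) :=
    (OnePoint.coe_eq_coe.mp ((psi_coe_of_ne_one F hγ1).symm.trans hb)).symm
  have hb0 : b ≠ 0 := hbγ ▸ div_ne_zero (fun h => hγ2 (eq_neg_of_add_eq_zero_left h)) hγ1'
  have hdisc : discrim 1 (-γ) 1 = b * (γ - 1) ^ 2 := by
    rw [hbγ, discrim]
    field_simp
    linear_combination (-1 : F) * h3
  have hsq : IsSquare (discrim 1 (-γ) 1) ↔ ¬ 2 ^ e ∣ orderOf b := by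
    rw [hdisc, isSquare_mul_sq_iff hγ1']
    exact FiniteField.isSquare_iff_not_two_pow_dvd_orderOf (hF ▸ Odd.pow (by decide)) (hF ▸ he) hb0
  have hpre : {x : F | theta F x = γ} = {x : F | 1 * (x * x) + -γ * x + 1 = 0} :=
    Set.ext fun x => (theta_coe_eq_coe_iff F).trans <| by
      change _ ↔ 1 * (x * x) + -γ * x + 1 = 0
      rw [one_mul, neg_mul, ← sub_eq_add_neg]
  rw [hpre]
  refine ⟨fun h => ncard_setOf_quadratic_eq_zero_eq_two one_ne_zero (hsq.mpr h) ?_,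
    fun h => setOf_quadratic_eq_zero_eq_empty (fun hs => hsq.mp hs h)⟩
  rw [hdisc]
  exact mul_ne_zero hb0 (pow_ne_zero 2 hγ1')
end
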